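/- arXiv:2001.01507 — 4 statements merged into one kernel-verified Lean document; each statement's English description precedes it below -/
import Mathlib

section
/- Let Λ : D(A) → D(B₁ ⊗ B₂) be a quantum channel (completely positive trace-preserving map) whose reduced channels Tr_{B₂}∘Λ and Tr_{B₁}∘Λ are both the identity channel on A (with B₁ ≅ B₂ ≅ A). Then dim A = 1. Equivalently, for dim A ≥ 2 no perfect cloning channel exists. -/
open Classical Matrix
open scoped ComplexOrder

/-- Complete positivity: `id_n ⊗ Λ` maps positive semidefinite matrices to
positive semidefinite matrices for every `n`. -/
def IsCompletelyPositive {A B : Type} [Fintype A] [DecidableEq A] [Fintype B] [DecidableEq B]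
    (Λ : Matrix A A ℂ →ₗ[ℂ] Matrix B B ℂ) : Prop :=
  ∀ (n : ℕ) (M : Matrix (Fin n × A) (Fin n × A) ℂ), M.PosSemidef →
    (Matrix.of (fun (p q : Fin n × B) =>
      Λ (Matrix.of (fun a a' => M (p.1, a) (q.1, a'))) p.2 q.2)).PosSemidef

/-- Partial trace over the second factor. -/
noncomputable def ptB {A B : Type} [Fintype A] [Fintype B]
    (ρ : Matrix (A × B) (A × B) ℂ) : Matrix A A ℂ :=
  fun a a' => ∑ b, ρ (a, b) (a', b)

/-- Partial trace over the first factor. -/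
noncomputable def ptA {A B : Type} [Fintype A] [Fintype B]
    (ρ : Matrix (A × B) (A × B) ℂ) : Matrix B B ℂ :=
  fun b b' => ∑ a, ρ (a, b) (a, b')

/-!
If both marginals of a positive semidefinite `X` equal `ρ` and `ρ φ = 0`, then `X` kills
`φ ⊗ e_k` and `e_k ⊗ φ` for every `k`: the quadratic forms of `X` at the vectors `φ ⊗ e_k` are
nonnegative and sum to `⟪φ, ρ φ⟫ = 0`. For `Λ` with both reduced channels the identity this gives
`Λ (e_a e_aᴴ) = e_{aa} e_{aa}ᴴ`, and, for `ψ = e_a ± e_b` with `a ≠ b`, that the columns `(a, a)`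
and `(b, b)` of `Λ (ψ ψᴴ)` agree. Since the two states `ψ ψᴴ` add up to `2 (e_a e_aᴴ + e_b e_bᴴ)`,
linearity of `Λ` would make the `((a, a), (a, a))` and `((a, a), (b, b))` entries of
`2 (e_{aa} e_{aa}ᴴ + e_{bb} e_{bb}ᴴ)` equal, that is `2 = 0`.
-/

lemma vecMulVec_add_add_vecMulVec_sub {n R : Type} [CommRing R] [StarRing R] (u v : n → R) :
    vecMulVec (u + v) (star (u + v)) + vecMulVec (u - v) (star (u - v)) =
      (2 : R) • (vecMulVec u (star u) + vecMulVec v (star v)) := by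
  simp only [star_add, star_sub, add_vecMulVec, vecMulVec_add, sub_vecMulVec, vecMulVec_sub]
  module

lemma vecMulVec_single_one_star {n R : Type} [DecidableEq n] [Semiring R] [StarRing R] (a : n) :
    vecMulVec (Pi.single a (1 : R)) (star (Pi.single a 1)) = single a a 1 := by
  rw [single_eq_single_vecMulVec_single, ← Pi.single_star, star_one]

lemma star_single_add_smul_dotProduct_single_sub_smul {n : Type} [Fintype n] [DecidableEq n]
    {a b : n} (hab : a ≠ b) {s : ℂ} (hs : star s * s = 1) :
    star (Pi.single a 1 + s • Pi.single b 1) ⬝ᵥ (Pi.single a 1 - s • Pi.single b 1) = 0 := by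
  simp only [star_add, star_smul, ← Pi.single_star, star_one, add_dotProduct, dotProduct_sub,
    smul_dotProduct, dotProduct_smul, single_dotProduct, Pi.single_apply, hab, hab.symm,
    if_true, if_false, smul_eq_mul, mul_one, mul_zero]
  linear_combination -hs

lemma IsCompletelyPositive.posSemidef_map {A B : Type} [Fintype A] [DecidableEq A] [Fintype B]
    [DecidableEq B] {Λ : Matrix A A ℂ →ₗ[ℂ] Matrix B B ℂ} (hΛ : IsCompletelyPositive Λ)
    {ρ : Matrix A A ℂ} (hρ : ρ.PosSemidef) : (Λ ρ).PosSemidef :=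
  (hΛ 1 _ (hρ.submatrix Prod.snd)).submatrix (fun b => (0, b))

section PartialTrace

variable {m n : Type} [Fintype m] [Fintype n]

lemma ptA_eq_ptB_submatrix_swap (X : Matrix (m × n) (m × n) ℂ) :
    ptA X = ptB (X.submatrix Prod.swap Prod.swap) :=
  rfl

lemma dotProduct_ptB_mulVec [DecidableEq n] (X : Matrix (m × n) (m × n) ℂ) (φ : m → ℂ) :
    star φ ⬝ᵥ ptB X *ᵥ φ =
      ∑ k, star (fun q : m × n => if q.2 = k then φ q.1 else 0) ⬝ᵥ
        X *ᵥ (fun q : m × n => if q.2 = k then φ q.1 else 0) := by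
  simp only [dotProduct, mulVec, ptB, Fintype.sum_prod_type, Pi.star_apply, apply_ite star,
    star_zero, ite_mul, zero_mul, Finset.sum_ite_eq', Finset.mem_univ, if_true, mul_ite,
    mul_zero]
  simp only [Finset.mul_sum, Finset.sum_mul]
  exact Finset.sum_comm_cycle

end PartialTrace

namespace Matrix.PosSemidef

variable {m n : Type} [Fintype m] [Fintype n] {X : Matrix (m × n) (m × n) ℂ}

lemma sum_apply_mul_eq_zero_of_ptB (hX : X.PosSemidef) {φ : m → ℂ} (hφ : ptB X *ᵥ φ = 0)
    (p : m × n) (k : n) : ∑ i, X p (i, k) * φ i = 0 := by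
  classical
  set w : n → m × n → ℂ := fun k q => if q.2 = k then φ q.1 else 0
  have hw : ∀ k, star (w k) ⬝ᵥ X *ᵥ w k = 0 := by
    have hsum := dotProduct_ptB_mulVec X φ
    rw [hφ, dotProduct_zero, eq_comm, Finset.sum_eq_zero_iff_of_nonneg] at hsum
    · exact fun k => hsum k (Finset.mem_univ k)
    · exact fun k _ => hX.dotProduct_mulVec_nonneg _
  have hXw := congrFun ((hX.dotProduct_mulVec_zero_iff (w k)).mp (hw k)) p
  simpa [w, mulVec, dotProduct, Fintype.sum_prod_type] using hXw

lemma sum_apply_mul_eq_zero_of_ptA (hX : X.PosSemidef) {φ : n → ℂ} (hφ : ptA X *ᵥ φ = 0)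
    (p : m × n) (k : m) : ∑ i, X p (k, i) * φ i = 0 :=
  (hX.submatrix Prod.swap).sum_apply_mul_eq_zero_of_ptB (ptA_eq_ptB_submatrix_swap X ▸ hφ)
    p.swap k

variable [DecidableEq m] [DecidableEq n]

lemma eq_single_of_ptB_of_ptA (hX : X.PosSemidef) {a : m} {c : n}
    (hB : ptB X = single a a 1) (hA : ptA X = single c c 1) :
    X = single (a, c) (a, c) 1 := by
  have hcol : ∀ p q, q ≠ (a, c) → X p q = 0 := by
    rintro p ⟨i, k⟩ hq
    by_cases hi : i = a
    · subst hi
      have hk : k ≠ c := fun h => hq (by rw [h])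
      simpa [Pi.single_apply] using hX.sum_apply_mul_eq_zero_of_ptA (φ := Pi.single k 1)
        (by ext j; simp [hA, single_apply_of_col_ne _ _ hk.symm]) p i
    · simpa [Pi.single_apply] using hX.sum_apply_mul_eq_zero_of_ptB (φ := Pi.single i 1)
        (by ext j; simp [hB, single_apply_of_col_ne _ _ (Ne.symm hi)]) p k
  have hdiag : X (a, c) (a, c) = 1 := by
    have h := congrFun (congrFun hB a) a
    rwa [ptB, Finset.sum_eq_single c (fun k _ hk => hcol _ _ (by simpa using hk))
      (by simp), single_apply_same] at h
  ext p q
  by_cases hq : q = (a, c)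
  · by_cases hp : p = (a, c)
    · simp [hp, hq, hdiag]
    · rw [← hX.isHermitian.apply, hcol q p hp, star_zero, single_apply_of_row_ne (Ne.symm hp)]
  · rw [hcol p q hq, single_apply_of_col_ne _ _ (Ne.symm hq)]

lemma apply_pair_eq_of_ptB_of_ptA (hX : X.PosSemidef) {a b : m} {c d : n} (hab : a ≠ b)
    (hcd : c ≠ d) {s t : ℂ} (hs : star s * s = 1) (ht : star t * t = 1)
    (hB : ptB X = vecMulVec (Pi.single a 1 + s • Pi.single b 1)
      (star (Pi.single a 1 + s • Pi.single b 1)))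
    (hA : ptA X = vecMulVec (Pi.single c 1 + t • Pi.single d 1)
      (star (Pi.single c 1 + t • Pi.single d 1)))
    (p : m × n) : X p (a, c) = s * t * X p (b, d) := by
  have hfst : ∀ k, X p (a, k) = s * X p (b, k) := fun k => by
    have := hX.sum_apply_mul_eq_zero_of_ptB (by
      rw [hB, vecMulVec_mulVec, star_single_add_smul_dotProduct_single_sub_smul hab hs,
        MulOpposite.op_zero, zero_smul]) p k
    simp [Pi.single_apply, mul_sub, Finset.sum_sub_distrib] at this
    linear_combination this
  have hsnd : ∀ k, X p (k, c) = t * X p (k, d) := fun k => by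
    have := hX.sum_apply_mul_eq_zero_of_ptA (by
      rw [hA, vecMulVec_mulVec, star_single_add_smul_dotProduct_single_sub_smul hcd ht,
        MulOpposite.op_zero, zero_smul]) p k
    simp [Pi.single_apply, mul_sub, Finset.sum_sub_distrib] at this
    linear_combination this
  rw [hsnd a, hfst d]
  ring

end Matrix.PosSemidef

theorem subsingleton_of_ptB_of_ptA {A : Type} [Fintype A] [DecidableEq A]
    (Λ : Matrix A A ℂ →ₗ[ℂ] Matrix (A × A) (A × A) ℂ)
    (hΛ : ∀ ρ : Matrix A A ℂ, ρ.PosSemidef → (Λ ρ).PosSemidef)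
    (hred₁ : ∀ ρ, ptB (Λ ρ) = ρ) (hred₂ : ∀ ρ, ptA (Λ ρ) = ρ) : Subsingleton A := by
  refine ⟨fun a b => by_contra fun hab => ?_⟩
  have hbasis : ∀ c : A, Λ (single c c 1) = single (c, c) (c, c) 1 := fun c =>
    (hΛ _ (vecMulVec_single_one_star (R := ℂ) c ▸ posSemidef_vecMulVec_self_star _)
      ).eq_single_of_ptB_of_ptA (hred₁ _) (hred₂ _)
  set X : ℂ → Matrix (A × A) (A × A) ℂ := fun s =>
    Λ (vecMulVec (Pi.single a 1 + s • Pi.single b 1) (star (Pi.single a 1 + s • Pi.single b 1)))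
  have hX : ∀ s : ℂ, star s * s = 1 → X s (a, a) (a, a) = s * s * X s (a, a) (b, b) :=
    fun s hs => (hΛ _ (posSemidef_vecMulVec_self_star _)).apply_pair_eq_of_ptB_of_ptA hab hab
      hs hs (hred₁ _) (hred₂ _) (a, a)
  have hsum : X 1 + X (-1) = (2 : ℂ) • (single (a, a) (a, a) 1 + single (b, b) (b, b) 1) := by
    simp only [X, one_smul, neg_one_smul, ← sub_eq_add_neg]
    rw [← map_add, vecMulVec_add_add_vecMulVec_sub, vecMulVec_single_one_star,
      vecMulVec_single_one_star, map_smul, map_add, hbasis, hbasis]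
  have hdiag : X 1 (a, a) (a, a) + X (-1) (a, a) (a, a) = 2 := by
    simpa [hab, Ne.symm hab, single_apply] using congrFun (congrFun hsum (a, a)) (a, a)
  have hoff : X 1 (a, a) (b, b) + X (-1) (a, a) (b, b) = 0 := by
    simpa [hab, Ne.symm hab, single_apply] using congrFun (congrFun hsum (a, a)) (b, b)
  rw [hX 1 (by simp), hX (-1) (by simp)] at hdiag
  exact two_ne_zero (by linear_combination hoff - hdiag : (2 : ℂ) = 0)

theorem no_cloning_general {A : Type} [Fintype A] [DecidableEq A] [Nonempty A]
    (Λ : Matrix A A ℂ →ₗ[ℂ] Matrix (A × A) (A × A) ℂ)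
    (hCP : IsCompletelyPositive Λ)
    (hred₁ : ∀ ρ : Matrix A A ℂ, ptB (Λ ρ) = ρ)
    (hred₂ : ∀ ρ : Matrix A A ℂ, ptA (Λ ρ) = ρ) :
    Fintype.card A = 1 :=
  have := subsingleton_of_ptB_of_ptA Λ (fun _ => hCP.posSemidef_map) hred₁ hred₂
  Fintype.card_eq_one_iff_nonempty_unique.mpr ⟨uniqueOfSubsingleton (Classical.arbitrary A)⟩

/-- No-cloning theorem in channel form: if a quantum channel
`Λ : D(A) → D(B₁ ⊗ B₂)` (with `B₁ ≅ B₂ ≅ A`) has both reduced channels equal to the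
identity channel on `A`, then `dim A = 1`. -/
theorem no_cloning {A : Type} [Fintype A] [DecidableEq A] [Nonempty A]
    (Λ : Matrix A A ℂ →ₗ[ℂ] Matrix (A × A) (A × A) ℂ)
    (hCP : IsCompletelyPositive Λ)
    (hTP : ∀ ρ : Matrix A A ℂ, (Λ ρ).trace = ρ.trace)
    (hred₁ : ∀ ρ : Matrix A A ℂ, ptB (Λ ρ) = ρ)
    (hred₂ : ∀ ρ : Matrix A A ℂ, ptA (Λ ρ) = ρ) :
    Fintype.card A = 1 :=
  no_cloning_general Λ hCP hred₁ hred₂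
end

section
/- Conversely, if the Choi state of a channel Λ : D(A) → D(B) is separable, ρ^Λ_{A'B} = Σ_α p_α ρ_α^{A'} ⊗ σ_α^B, then Λ is a measure-and-prepare channel: Λ(τ) = Σ_α Tr(M_α τ) σ_α with M_α = d_A p_α (ρ_α^{A'})^T, and {M_α} is a POVM. -/
open Classical Matrix Kronecker
open scoped ComplexOrder

/-- The projector `|Γ⟩⟨Γ|` onto the maximally entangled state on `A' ⊗ A`. -/
noncomputable def maxEntProj (A : Type) [Fintype A] [DecidableEq A] :
    Matrix (A × A) (A × A) ℂ :=
  fun p q => if p.1 = p.2 ∧ q.1 = q.2 then ((Fintype.card A : ℂ))⁻¹ else 0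

/-- The Choi state `ρ^Λ_{A'B} = (id_{A'} ⊗ Λ)(|Γ⟩⟨Γ|)`. -/
noncomputable def choiState {A B : Type} [Fintype A] [DecidableEq A] [Fintype B] [DecidableEq B]
    (Λ : Matrix A A ℂ → Matrix B B ℂ) : Matrix (A × B) (A × B) ℂ :=
  fun p q =>
    Λ (Matrix.of (fun a a' => maxEntProj A (p.1, a) (q.1, a'))) p.2 q.2

/-! The Choi state determines the channel: `Λ τ = d_A Tr_{A'}(ρ^Λ (τᵀ ⊗ 1))`. A product term
`ρ_α ⊗ σ_α` of a separable decomposition contributes `Tr(ρ_α τᵀ) σ_α = Tr(ρ_αᵀ τ) σ_α`, which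
is the measure-and-prepare form. Trace preservation makes the `A'`-marginal of `ρ^Λ` maximally
mixed, `∑ p_α ρ_α = 1 / d_A`; transposing and scaling by `d_A` gives `∑ M_α = 1`. -/

namespace Matrix

variable {R m n : Type*} [CommSemiring R]

section
variable [Fintype m]

def partialTraceLeft : Matrix (m × n) (m × n) R →ₗ[R] Matrix n n R where
  toFun X := of fun j j' => ∑ i, X (i, j) (i, j')
  map_add' X Y := by ext; simp [Finset.sum_add_distrib]
  map_smul' r X := by ext; simp [Finset.mul_sum]

@[simp]
lemma partialTraceLeft_apply (X : Matrix (m × n) (m × n) R) (j j' : n) :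
    partialTraceLeft X j j' = ∑ i, X (i, j) (i, j') := rfl

lemma partialTraceLeft_kronecker (P : Matrix m m R) (Q : Matrix n n R) :
    partialTraceLeft (P ⊗ₖ Q) = P.trace • Q := by
  ext; simp [trace, Finset.sum_mul]

end

section
variable [Fintype n]

def partialTraceRight : Matrix (m × n) (m × n) R →ₗ[R] Matrix m m R where
  toFun X := of fun i i' => ∑ j, X (i, j) (i', j)
  map_add' X Y := by ext; simp [Finset.sum_add_distrib]
  map_smul' r X := by ext; simp [Finset.mul_sum]

@[simp]
lemma partialTraceRight_apply (X : Matrix (m × n) (m × n) R) (i i' : m) :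
    partialTraceRight X i i' = ∑ j, X (i, j) (i', j) := rfl

lemma partialTraceRight_kronecker (P : Matrix m m R) (Q : Matrix n n R) :
    partialTraceRight (P ⊗ₖ Q) = Q.trace • P := by
  ext; simp [trace, Finset.mul_sum, mul_comm]

end

end Matrix

section Choi

variable {A B : Type} [Fintype A] [DecidableEq A] [Fintype B] [DecidableEq B]

lemma maxEntProj_submatrix (a a' : A) :
    (maxEntProj A).submatrix (Prod.mk a) (Prod.mk a') =
      (Fintype.card A : ℂ)⁻¹ • single a a' 1 := by
  ext x x'
  by_cases h : a = x ∧ a' = x' <;> simp_all [maxEntProj]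

lemma choiState_apply (Λ : Matrix A A ℂ →ₗ[ℂ] Matrix B B ℂ) (a a' : A) (b b' : B) :
    choiState Λ (a, b) (a', b') = (Fintype.card A : ℂ)⁻¹ * Λ (single a a' 1) b b' := by
  change Λ ((maxEntProj A).submatrix (Prod.mk a) (Prod.mk a')) b b' = _
  rw [maxEntProj_submatrix, map_smul, Matrix.smul_apply, smul_eq_mul]

lemma apply_eq_card_smul_partialTraceLeft_choiState (Λ : Matrix A A ℂ →ₗ[ℂ] Matrix B B ℂ)
    (τ : Matrix A A ℂ) :
    Λ τ = (Fintype.card A : ℂ) • partialTraceLeft (choiState Λ * (τᵀ ⊗ₖ 1)) := by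
  rcases isEmpty_or_nonempty A with hA | hA
  · simp [Subsingleton.elim τ 0]
  have hd : (Fintype.card A : ℂ) ≠ 0 := by simp [Fintype.card_ne_zero]
  have hΛ : Λ τ = ∑ a, ∑ a', τ a a' • Λ (single a a' 1) := by
    conv_lhs => rw [matrix_eq_sum_single τ]
    simp [map_sum, ← map_smul, smul_single]
  ext b b'
  simp only [hΛ, Matrix.sum_apply, Matrix.smul_apply, smul_eq_mul, partialTraceLeft_apply,
    mul_apply, kroneckerMap_apply, transpose_apply, one_apply, mul_ite, mul_one, mul_zero,
    Fintype.sum_prod_type, choiState_apply, Finset.sum_ite_eq', Finset.mem_univ, ↓reduceIte,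
    Finset.mul_sum]
  refine Finset.sum_congr rfl fun a _ => Finset.sum_congr rfl fun a' _ => ?_
  field_simp

lemma partialTraceRight_choiState (Λ : Matrix A A ℂ →ₗ[ℂ] Matrix B B ℂ)
    (hTP : ∀ ρ : Matrix A A ℂ, (Λ ρ).trace = ρ.trace) :
    partialTraceRight (choiState Λ) = (Fintype.card A : ℂ)⁻¹ • 1 := by
  ext a a'
  simp only [partialTraceRight_apply, choiState_apply, ← Finset.mul_sum]
  change _ * (Λ _).trace = _
  rw [hTP]
  by_cases h : a = a' <;> simp [h]

end Choi

theorem measure_and_prepare_of_separable_choi_general {A B γ : Type}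
    [Fintype A] [DecidableEq A] [Fintype B] [DecidableEq B] [Fintype γ]
    (Λ : Matrix A A ℂ →ₗ[ℂ] Matrix B B ℂ)
    (hTP : ∀ ρ : Matrix A A ℂ, (Λ ρ).trace = ρ.trace)
    (p : γ → ℝ) (hp0 : ∀ α, 0 ≤ p α)
    (ρA : γ → Matrix A A ℂ) (hρA : ∀ α, (ρA α).PosSemidef ∧ (ρA α).trace = 1)
    (σ : γ → Matrix B B ℂ) (hσ : ∀ α, (σ α).PosSemidef ∧ (σ α).trace = 1)
    (hchoi : choiState (fun ρ => Λ ρ) = ∑ α, (p α : ℂ) • (ρA α ⊗ₖ σ α))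
    (M : γ → Matrix A A ℂ)
    (hMdef : ∀ α, M α = ((Fintype.card A : ℂ) * (p α : ℂ)) • (ρA α).transpose) :
    (∀ α, (M α).PosSemidef) ∧ (∑ α, M α = 1) ∧
      (∀ τ : Matrix A A ℂ, Λ τ = ∑ α, ((M α * τ).trace) • σ α) := by
  set d : ℂ := (Fintype.card A : ℂ)
  have hmarginal : ∑ α, (p α : ℂ) • ρA α = d⁻¹ • 1 := by
    rw [← partialTraceRight_choiState Λ hTP, hchoi, map_sum]
    simp only [map_smul, partialTraceRight_kronecker, (hσ _).2, one_smul]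
  have htrace (α : γ) (τ : Matrix A A ℂ) :
      (M α * τ).trace = d * p α * (ρA α * τᵀ).trace := by
    rw [hMdef, smul_mul, trace_smul, smul_eq_mul, ← trace_transpose, transpose_mul,
      transpose_transpose, trace_mul_comm]
  refine ⟨fun α => ?_, ?_, fun τ => ?_⟩
  · rw [hMdef]
    exact (hρA α).1.transpose.smul
      (mul_nonneg (Nat.cast_nonneg _) (Complex.zero_le_real.2 (hp0 α)))
  · rcases isEmpty_or_nonempty A with hA | hA
    · exact Subsingleton.elim _ _
    have hd : d ≠ 0 := by simp [d, Fintype.card_ne_zero]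
    simp_rw [hMdef, mul_smul, ← Finset.smul_sum, ← transpose_smul, ← transpose_sum, hmarginal]
    simp [hd]
  · rw [apply_eq_card_smul_partialTraceLeft_choiState Λ τ, hchoi, Finset.sum_mul, map_sum,
      Finset.smul_sum]
    refine Finset.sum_congr rfl fun α _ => ?_
    rw [smul_mul, ← mul_kronecker_mul, map_smul, partialTraceLeft_kronecker, mul_one, htrace,
      smul_smul, smul_smul, mul_assoc]

/-- If the Choi state of a channel `Λ` is separable,
`ρ^Λ = ∑ α, p_α • (ρ_α^{A'} ⊗ σ_α^B)`, then `Λ` is the measure-and-prepare channel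
`Λ(τ) = ∑ α, Tr(M_α τ) σ_α` with `M_α = d_A p_α (ρ_α^{A'})ᵀ`, and `{M_α}` is a POVM. -/
theorem measure_and_prepare_of_separable_choi {A B γ : Type}
    [Fintype A] [DecidableEq A] [Fintype B] [DecidableEq B] [Fintype γ]
    (Λ : Matrix A A ℂ →ₗ[ℂ] Matrix B B ℂ)
    (hCP : IsCompletelyPositive Λ)
    (hTP : ∀ ρ : Matrix A A ℂ, (Λ ρ).trace = ρ.trace)
    (p : γ → ℝ) (hp0 : ∀ α, 0 ≤ p α) (hp1 : ∑ α, p α = 1)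
    (ρA : γ → Matrix A A ℂ) (hρA : ∀ α, (ρA α).PosSemidef ∧ (ρA α).trace = 1)
    (σ : γ → Matrix B B ℂ) (hσ : ∀ α, (σ α).PosSemidef ∧ (σ α).trace = 1)
    (hchoi : choiState (fun ρ => Λ ρ) = ∑ α, (p α : ℂ) • (ρA α ⊗ₖ σ α))
    (M : γ → Matrix A A ℂ)
    (hMdef : ∀ α, M α = ((Fintype.card A : ℂ) * (p α : ℂ)) • (ρA α).transpose) :
    (∀ α, (M α).PosSemidef) ∧ (∑ α, M α = 1) ∧
      (∀ τ : Matrix A A ℂ, Λ τ = ∑ α, ((M α * τ).trace) • σ α) :=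
  measure_and_prepare_of_separable_choi_general Λ hTP p hp0 ρA hρA σ hσ hchoi M hMdef
end

section
/- Let Λ₁ be the qubit channel Λ₁(ρ) = ⟨0|ρ|0⟩ |0⟩⟨0| + ⟨1|ρ|1⟩ |+⟩⟨+|. Then any measure-and-prepare decomposition Λ₁(ρ) = Σ_α Tr(M_α ρ) σ_α with POVM {M_α} and states σ_α must (after collecting proportional elements) use the projective measurement {|0⟩⟨0|, |1⟩⟨1|}: every M_α is proportional to |0⟩⟨0| or to |1⟩⟨1|, with σ_α = |0⟩⟨0| or |+⟩⟨+| respectively. -/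
/-!
`Λ₁` sends `|0⟩⟨0|` and `|1⟩⟨1|` to the pure states `|0⟩⟨0|` and `|+⟩⟨+|`, so these are the
nonnegative combinations `∑ α, (M α)₀₀ • σ α` and `∑ α, (M α)₁₁ • σ α`. A pure state has a kernel
vector (`|1⟩`, resp. `|0⟩ - |1⟩`), and every summand of such a combination with nonzero weight
must annihilate it; a qubit state annihilating `|1⟩` (resp. `|0⟩ - |1⟩`) is `|0⟩⟨0|` (resp.
`|+⟩⟨+|`). Hence `(M α)₀₀ ≠ 0` forces `σ α = |0⟩⟨0|` and `(M α)₁₁ ≠ 0` forces `σ α = |+⟩⟨+|`,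
so at most one diagonal entry of `M α` is nonzero, and a positive semidefinite `M α` with a
vanishing diagonal entry is a multiple of the projector onto the other basis vector.
-/

open Classical Matrix
open scoped ComplexOrder

noncomputable section

/-- `|0⟩`. -/
def e0 : Fin 2 → ℂ := fun i => if i = 0 then 1 else 0
/-- `|1⟩`. -/
def e1 : Fin 2 → ℂ := fun i => if i = 1 then 1 else 0
/-- `|+⟩ = (|0⟩ + |1⟩)/√2`. -/
def plusv : Fin 2 → ℂ := fun _ => ((Real.sqrt 2 : ℂ))⁻¹

/-- Rank-one projector `|u⟩⟨u|`. -/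
def proj (u : Fin 2 → ℂ) : Matrix (Fin 2) (Fin 2) ℂ := Matrix.vecMulVec u (star u)

/-- The channel `Λ₁(ρ) = ⟨0|ρ|0⟩ |0⟩⟨0| + ⟨1|ρ|1⟩ |+⟩⟨+|`. -/
def Lambda1 (ρ : Matrix (Fin 2) (Fin 2) ℂ) : Matrix (Fin 2) (Fin 2) ℂ :=
  ρ 0 0 • proj e0 + ρ 1 1 • proj plusv

end

namespace Matrix.PosSemidef

variable {n 𝕜 : Type*} [RCLike 𝕜]

theorem apply_eq_zero_of_diag_eq_zero [Fintype n] [DecidableEq n] {A : Matrix n n 𝕜}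
    (hA : A.PosSemidef) {i : n} (hi : A i i = 0) (j : n) : A j i = 0 ∧ A i j = 0 := by
  have hcol : A *ᵥ Pi.single i 1 = 0 :=
    (hA.dotProduct_mulVec_zero_iff _).mp (by simpa [mulVec_single_one] using hi)
  have hji : A j i = 0 := by simpa [mulVec_single_one] using congrFun hcol j
  exact ⟨hji, by rw [← hA.isHermitian.apply, hji, star_zero]⟩

theorem mulVec_eq_zero_of_sum_smul_mulVec_eq_zero [Fintype n] {ι : Type*} [Fintype ι]
    {c : ι → 𝕜} {A : ι → Matrix n n 𝕜} (hc : ∀ i, 0 ≤ c i) (hA : ∀ i, (A i).PosSemidef)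
    {x : n → 𝕜} (hx : (∑ i, c i • A i) *ᵥ x = 0) {i : ι} (hi : c i ≠ 0) : A i *ᵥ x = 0 := by
  have hq : ∑ j, c j * (star x ⬝ᵥ A j *ᵥ x) = 0 := by
    simpa [sum_mulVec, smul_mulVec, dotProduct_sum, dotProduct_smul] using
      congrArg (star x ⬝ᵥ ·) hx
  have hqi := (Finset.sum_eq_zero_iff_of_nonneg fun j _ =>
    mul_nonneg (hc j) ((hA j).dotProduct_mulVec_nonneg x)).mp hq i (Finset.mem_univ i)
  exact ((hA i).dotProduct_mulVec_zero_iff x).mp ((mul_eq_zero.mp hqi).resolve_left hi)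

theorem exists_pos_smul_of_eq_diag_smul {A P : Matrix n n 𝕜} (hA : A.PosSemidef) {i : n}
    (hP : A = A i i • P) (hA0 : A ≠ 0) : ∃ c : ℝ, 0 < c ∧ A = (c : 𝕜) • P := by
  have hpos : 0 < A i i :=
    hA.diag_nonneg.lt_of_ne fun h => hA0 (by rw [hP, ← h, zero_smul])
  obtain ⟨c, hc, hci⟩ := RCLike.pos_iff_exists_ofReal.mp hpos
  exact ⟨c, hc, hci ▸ hP⟩

end Matrix.PosSemidef

theorem proj_e0_apply (i j : Fin 2) : proj e0 i j = if i = 0 ∧ j = 0 then 1 else 0 := by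
  fin_cases i <;> fin_cases j <;> simp [proj, vecMulVec_apply, e0]

theorem proj_e1_apply (i j : Fin 2) : proj e1 i j = if i = 1 ∧ j = 1 then 1 else 0 := by
  fin_cases i <;> fin_cases j <;> simp [proj, vecMulVec_apply, e1]

theorem proj_plusv_apply (i j : Fin 2) : proj plusv i j = 2⁻¹ := by
  simp only [proj, vecMulVec_apply, Pi.star_apply, plusv, ← Complex.ofReal_inv,
    Complex.star_def, Complex.conj_ofReal, ← Complex.ofReal_mul, ← mul_inv,
    Real.mul_self_sqrt zero_le_two]
  norm_num

theorem trace_mul_proj_e0 (A : Matrix (Fin 2) (Fin 2) ℂ) : (A * proj e0).trace = A 0 0 := by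
  simp [trace_fin_two, mul_apply, proj_e0_apply]

theorem trace_mul_proj_e1 (A : Matrix (Fin 2) (Fin 2) ℂ) : (A * proj e1).trace = A 1 1 := by
  simp [trace_fin_two, mul_apply, proj_e1_apply]

theorem Lambda1_proj_e0 : Lambda1 (proj e0) = proj e0 := by
  simp [Lambda1, proj_e0_apply]

theorem Lambda1_proj_e1 : Lambda1 (proj e1) = proj plusv := by
  simp [Lambda1, proj_e1_apply]

theorem proj_e0_mulVec_e1 : proj e0 *ᵥ e1 = 0 := by
  ext i; simp [mulVec, dotProduct, proj_e0_apply, e1]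

theorem proj_plusv_mulVec : proj plusv *ᵥ ![1, -1] = 0 := by
  ext i; simp [mulVec, dotProduct, proj_plusv_apply]

theorem proj_e0_ne_proj_plusv : proj e0 ≠ proj plusv := fun h => by
  simpa [proj_e0_apply, proj_plusv_apply] using congrFun (congrFun h 1) 1

theorem Matrix.IsHermitian.eq_proj_e0 {A : Matrix (Fin 2) (Fin 2) ℂ} (hA : A.IsHermitian)
    (htr : A.trace = 1) (h : A *ᵥ e1 = 0) : A = proj e0 := by
  have h01 : A 0 1 = 0 := by simpa [mulVec, dotProduct, e1] using congrFun h 0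
  have h11 : A 1 1 = 0 := by simpa [mulVec, dotProduct, e1] using congrFun h 1
  have h10 : A 1 0 = 0 := by rw [← hA.apply, h01, star_zero]
  have h00 : A 0 0 = 1 := by simpa [trace_fin_two, h11] using htr
  ext i j
  fin_cases i <;> fin_cases j <;> simp [proj_e0_apply, h00, h01, h10, h11]

theorem Matrix.IsHermitian.eq_proj_plusv {A : Matrix (Fin 2) (Fin 2) ℂ} (hA : A.IsHermitian)
    (htr : A.trace = 1) (h : A *ᵥ ![1, -1] = 0) : A = proj plusv := by
  have h01 : A 0 1 = A 0 0 := by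
    linear_combination -(by simpa [mulVec, dotProduct] using congrFun h 0 : A 0 0 + -A 0 1 = 0)
  have h10 : A 1 0 = A 1 1 := by
    linear_combination (by simpa [mulVec, dotProduct] using congrFun h 1 : A 1 0 + -A 1 1 = 0)
  have h00 : star (A 0 0) = A 0 0 := hA.apply 0 0
  have h11 : A 1 1 = A 0 0 := by rw [← h10, ← hA.apply, h01, h00]
  have hhalf : A 0 0 = 2⁻¹ := by
    rw [trace_fin_two, h11] at htr
    linear_combination htr / 2
  ext i j
  fin_cases i <;> fin_cases j <;> simp [proj_plusv_apply, hhalf, h01, h10, h11]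

theorem Matrix.PosSemidef.eq_smul_proj_e0 {A : Matrix (Fin 2) (Fin 2) ℂ} (hA : A.PosSemidef)
    (h11 : A 1 1 = 0) : A = A 0 0 • proj e0 := by
  have hoff := hA.apply_eq_zero_of_diag_eq_zero h11 0
  ext i j
  fin_cases i <;> fin_cases j <;> simp [proj_e0_apply, hoff, h11]

theorem Matrix.PosSemidef.eq_smul_proj_e1 {A : Matrix (Fin 2) (Fin 2) ℂ} (hA : A.PosSemidef)
    (h00 : A 0 0 = 0) : A = A 1 1 • proj e1 := by
  have hoff := hA.apply_eq_zero_of_diag_eq_zero h00 1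
  ext i j
  fin_cases i <;> fin_cases j <;> simp [proj_e1_apply, hoff, h00]

section Decomposition

variable {k : ℕ} {M σ : Fin k → Matrix (Fin 2) (Fin 2) ℂ}

theorem eq_proj_e0_of_decomposition (hM : ∀ α, (M α).PosSemidef)
    (hσ : ∀ α, (σ α).PosSemidef ∧ (σ α).trace = 1)
    (hdec : ∀ ρ, Lambda1 ρ = ∑ α, ((M α * ρ).trace) • σ α) {α : Fin k} (hα : M α 0 0 ≠ 0) :
    σ α = proj e0 := by
  have hsum : proj e0 = ∑ β, M β 0 0 • σ β := by
    simp only [← trace_mul_proj_e0, ← hdec, Lambda1_proj_e0]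
  refine (hσ α).1.isHermitian.eq_proj_e0 (hσ α).2 ?_
  refine Matrix.PosSemidef.mulVec_eq_zero_of_sum_smul_mulVec_eq_zero (fun β => (hM β).diag_nonneg)
    (fun β => (hσ β).1) ?_ hα
  rw [← hsum, proj_e0_mulVec_e1]

theorem eq_proj_plusv_of_decomposition (hM : ∀ α, (M α).PosSemidef)
    (hσ : ∀ α, (σ α).PosSemidef ∧ (σ α).trace = 1)
    (hdec : ∀ ρ, Lambda1 ρ = ∑ α, ((M α * ρ).trace) • σ α) {α : Fin k} (hα : M α 1 1 ≠ 0) :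
    σ α = proj plusv := by
  have hsum : proj plusv = ∑ β, M β 1 1 • σ β := by
    simp only [← trace_mul_proj_e1, ← hdec, Lambda1_proj_e1]
  refine (hσ α).1.isHermitian.eq_proj_plusv (hσ α).2 ?_
  refine Matrix.PosSemidef.mulVec_eq_zero_of_sum_smul_mulVec_eq_zero (fun β => (hM β).diag_nonneg)
    (fun β => (hσ β).1) ?_ hα
  rw [← hsum, proj_plusv_mulVec]

end Decomposition

theorem lambda1_measurement_is_computational_basis_general
    {k : ℕ} (M : Fin k → Matrix (Fin 2) (Fin 2) ℂ)
    (hM : ∀ α, (M α).PosSemidef)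
    (σ : Fin k → Matrix (Fin 2) (Fin 2) ℂ)
    (hσ : ∀ α, (σ α).PosSemidef ∧ (σ α).trace = 1)
    (hdec : ∀ ρ : Matrix (Fin 2) (Fin 2) ℂ, Lambda1 ρ = ∑ α, ((M α * ρ).trace) • σ α) :
    ∀ α, M α ≠ 0 →
      ((∃ c : ℝ, 0 < c ∧ M α = (c : ℂ) • proj e0) ∧ σ α = proj e0) ∨
      ((∃ c : ℝ, 0 < c ∧ M α = (c : ℂ) • proj e1) ∧ σ α = proj plusv) := by
  intro α hα
  by_cases h11 : M α 1 1 = 0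
  · have hM0 := (hM α).eq_smul_proj_e0 h11
    have h00 : M α 0 0 ≠ 0 := fun h00 => hα (by rw [hM0, h00, zero_smul])
    exact .inl ⟨(hM α).exists_pos_smul_of_eq_diag_smul hM0 hα,
      eq_proj_e0_of_decomposition hM hσ hdec h00⟩
  · have hσα := eq_proj_plusv_of_decomposition hM hσ hdec h11
    have h00 : M α 0 0 = 0 := by
      by_contra h00
      exact proj_e0_ne_proj_plusv ((eq_proj_e0_of_decomposition hM hσ hdec h00).symm.trans hσα)
    exact .inr ⟨(hM α).exists_pos_smul_of_eq_diag_smul ((hM α).eq_smul_proj_e1 h00) hα, hσα⟩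

/-- Any measure-and-prepare decomposition `Λ₁(ρ) = ∑ α, Tr(M_α ρ) σ_α` of `Λ₁` must use
the projective measurement `{|0⟩⟨0|, |1⟩⟨1|}`: every nonzero `M_α` is (positively)
proportional to `|0⟩⟨0|` or to `|1⟩⟨1|`, with prepared state `σ_α = |0⟩⟨0|` or `|+⟩⟨+|`
respectively. -/
theorem lambda1_measurement_is_computational_basis
    {k : ℕ} (M : Fin k → Matrix (Fin 2) (Fin 2) ℂ)
    (hM : ∀ α, (M α).PosSemidef) (hM1 : ∑ α, M α = 1)
    (σ : Fin k → Matrix (Fin 2) (Fin 2) ℂ)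
    (hσ : ∀ α, (σ α).PosSemidef ∧ (σ α).trace = 1)
    (hdec : ∀ ρ : Matrix (Fin 2) (Fin 2) ℂ, Lambda1 ρ = ∑ α, ((M α * ρ).trace) • σ α) :
    ∀ α, M α ≠ 0 →
      ((∃ c : ℝ, 0 < c ∧ M α = (c : ℂ) • proj e0) ∧ σ α = proj e0) ∨
      ((∃ c : ℝ, 0 < c ∧ M α = (c : ℂ) • proj e1) ∧ σ α = proj plusv) :=
  lambda1_measurement_is_computational_basis_general M hM σ hσ hdec
end

section
/- Let Λ₂ be the qubit channel Λ₂(ρ) = ⟨+|ρ|+⟩ ρ₊ + ⟨−|ρ|−⟩ ρ₋ with ρ₊ = p|0⟩⟨0| + (1−p)|1⟩⟨1|, ρ₋ = (1−p)|0⟩⟨0| + p|1⟩⟨1|, and p ≠ 1/2. Then Λ₂ cannot be written in the form Λ₂(ρ) = ⟨0|ρ|0⟩ σ₀ + ⟨1|ρ|1⟩ σ₁ for any density matrices σ₀, σ₁. -/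
open Classical Matrix
open scoped ComplexOrder

noncomputable section

/-- `|−⟩ = (|0⟩ − |1⟩)/√2`. -/
def minusv : Fin 2 → ℂ := fun i => if i = 0 then ((Real.sqrt 2 : ℂ))⁻¹ else -((Real.sqrt 2 : ℂ))⁻¹

/-- `ρ₊ = p|0⟩⟨0| + (1−p)|1⟩⟨1|`. -/
def rhoPlus (p : ℝ) : Matrix (Fin 2) (Fin 2) ℂ := (p : ℂ) • proj e0 + ((1 - p : ℝ) : ℂ) • proj e1
/-- `ρ₋ = (1−p)|0⟩⟨0| + p|1⟩⟨1|`. -/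
def rhoMinus (p : ℝ) : Matrix (Fin 2) (Fin 2) ℂ := ((1 - p : ℝ) : ℂ) • proj e0 + (p : ℂ) • proj e1

/-- The channel `Λ₂(ρ) = ⟨+|ρ|+⟩ ρ₊ + ⟨−|ρ|−⟩ ρ₋`. -/
def Lambda2 (p : ℝ) (ρ : Matrix (Fin 2) (Fin 2) ℂ) : Matrix (Fin 2) (Fin 2) ℂ :=
  (star plusv ⬝ᵥ ρ.mulVec plusv) • rhoPlus p + (star minusv ⬝ᵥ ρ.mulVec minusv) • rhoMinus p

end

/-! Every map `ρ ↦ ρ₀₀ σ₀ + ρ₁₁ σ₁` sends `|+⟩⟨+|` and `|−⟩⟨−|`, which have the same diagonal,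
to the same state, whereas `Λ₂` sends them to `ρ₊` and `ρ₋`, whose `(0,0)` entries `p` and
`1 - p` differ. -/

open Matrix

lemma trace_proj (u : Fin 2 → ℂ) : (proj u).trace = star u ⬝ᵥ u := by
  rw [proj, trace_vecMulVec, dotProduct_comm]

lemma proj_apply_self (u : Fin 2 → ℂ) (i : Fin 2) : proj u i i = star (u i) * u i := by
  rw [proj, vecMulVec_apply, Pi.star_apply, mul_comm]

lemma star_dotProduct_proj_mulVec (u v : Fin 2 → ℂ) :
    star v ⬝ᵥ proj u *ᵥ v = (star v ⬝ᵥ u) * (star u ⬝ᵥ v) := by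
  rw [proj, vecMulVec_mulVec, op_smul_eq_smul, dotProduct_smul, smul_eq_mul, mul_comm]

lemma inv_sqrt_two_mul_self : ((√2 : ℝ) : ℂ)⁻¹ * ((√2 : ℝ) : ℂ)⁻¹ = 1 / 2 := by
  rw [← mul_inv, ← Complex.ofReal_mul, Real.mul_self_sqrt zero_le_two]
  norm_num

lemma star_plusv_dotProduct_plusv : star plusv ⬝ᵥ plusv = 1 := by
  simp [plusv, dotProduct, inv_sqrt_two_mul_self]

lemma star_minusv_dotProduct_minusv : star minusv ⬝ᵥ minusv = 1 := by
  simp [minusv, dotProduct, Fin.sum_univ_two, inv_sqrt_two_mul_self]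
  norm_num

lemma star_minusv_dotProduct_plusv : star minusv ⬝ᵥ plusv = 0 := by
  simp [minusv, plusv, dotProduct, Fin.sum_univ_two]

lemma star_plusv_dotProduct_minusv : star plusv ⬝ᵥ minusv = 0 := by
  simp [minusv, plusv, dotProduct, Fin.sum_univ_two]

lemma proj_plusv_apply_self (i : Fin 2) : proj plusv i i = 1 / 2 := by
  simp [proj_apply_self, plusv, inv_sqrt_two_mul_self]

lemma proj_minusv_apply_self (i : Fin 2) : proj minusv i i = 1 / 2 := by
  fin_cases i <;> simp [proj_apply_self, minusv, inv_sqrt_two_mul_self]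

lemma lambda2_proj_plusv (p : ℝ) : Lambda2 p (proj plusv) = rhoPlus p := by
  rw [Lambda2, star_dotProduct_proj_mulVec, star_dotProduct_proj_mulVec,
    star_plusv_dotProduct_plusv, star_minusv_dotProduct_plusv, one_mul, zero_mul, one_smul,
    zero_smul, add_zero]

lemma lambda2_proj_minusv (p : ℝ) : Lambda2 p (proj minusv) = rhoMinus p := by
  rw [Lambda2, star_dotProduct_proj_mulVec, star_dotProduct_proj_mulVec,
    star_minusv_dotProduct_minusv, star_plusv_dotProduct_minusv, zero_mul, one_mul, zero_smul,
    one_smul, zero_add]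

lemma rhoPlus_apply_zero_zero (p : ℝ) : rhoPlus p 0 0 = p := by
  simp [rhoPlus, proj_apply_self, e0, e1]

lemma rhoMinus_apply_zero_zero (p : ℝ) : rhoMinus p 0 0 = (1 - p : ℝ) := by
  simp [rhoMinus, proj_apply_self, e0, e1]

/-- For `p ≠ 1/2`, the channel `Λ₂` cannot be written as a measure-and-prepare channel
with measurement in the computational basis: there are no density matrices `σ₀, σ₁` with
`Λ₂(ρ) = ⟨0|ρ|0⟩ σ₀ + ⟨1|ρ|1⟩ σ₁` on all density matrices `ρ`. -/
theorem lambda2_not_computational_basis (p : ℝ) (hp : p ≠ 1 / 2) :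
    ¬ ∃ σ₀ σ₁ : Matrix (Fin 2) (Fin 2) ℂ,
        (σ₀.PosSemidef ∧ σ₀.trace = 1) ∧ (σ₁.PosSemidef ∧ σ₁.trace = 1) ∧
        ∀ ρ : Matrix (Fin 2) (Fin 2) ℂ, ρ.PosSemidef → ρ.trace = 1 →
          Lambda2 p ρ = ρ 0 0 • σ₀ + ρ 1 1 • σ₁ := by
  rintro ⟨σ₀, σ₁, -, -, hΛ⟩
  have hplus := hΛ (proj plusv) (posSemidef_vecMulVec_self_star _)
    (by rw [trace_proj, star_plusv_dotProduct_plusv])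
  have hminus := hΛ (proj minusv) (posSemidef_vecMulVec_self_star _)
    (by rw [trace_proj, star_minusv_dotProduct_minusv])
  rw [lambda2_proj_plusv, proj_plusv_apply_self, proj_plusv_apply_self] at hplus
  rw [lambda2_proj_minusv, proj_minusv_apply_self, proj_minusv_apply_self, ← hplus] at hminus
  have h00 := congrFun (congrFun hminus 0) 0
  rw [rhoMinus_apply_zero_zero, rhoPlus_apply_zero_zero, Complex.ofReal_inj] at h00
  exact hp (by linarith)
end
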